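/- Let f: Q → P² be a conic bundle given as the zero locus in P²×P² of a (2,2)-form ∑ a_ij(x) y_i y_j with symmetric matrix A(x) of quadratic forms, and suppose rank A(x) = 2 for all x on the discriminant curve Γ = {det A = 0}. If at a point x ∈ Γ the matrix A(x) is diag(1,1,0) in suitable coordinates, then the fibre p⁻¹(x) contains a singular point of Q if and only if the entry a₃₃ lies in m², where m is the maximal ideal of the local ring of P² at x; moreover in that case Γ is singular at x. Consequently the restriction of the first projection to Sing(Q) maps bijectively onto Sing(Γ). -/

import Mathlib

open MvPolynomial

noncomputable section

/-- The (2,2) form `∑ aᵢⱼ(x) yᵢ yⱼ` on `ℙ² × ℙ²` associated to a symmetric 3×3 matrix of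
quadratic forms; the variables `Sum.inl` are the `x`-coordinates, `Sum.inr` the
`y`-coordinates. -/
def conicBundleForm (A : Matrix (Fin 3) (Fin 3) (MvPolynomial (Fin 3) ℂ)) :
    MvPolynomial (Fin 3 ⊕ Fin 3) ℂ :=
  ∑ i : Fin 3, ∑ j : Fin 3,
    (rename Sum.inl (A i j)) * X (Sum.inr i) * X (Sum.inr j)

/-- `(x, y)` is a singular point of the hypersurface `Q = {∑ aᵢⱼ(x) yᵢ yⱼ = 0}`:
the defining equation and all of its partial derivatives vanish there. -/
def SingQ (A : Matrix (Fin 3) (Fin 3) (MvPolynomial (Fin 3) ℂ)) (x y : Fin 3 → ℂ) : Prop :=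
  eval (Sum.elim x y) (conicBundleForm A) = 0 ∧
    ∀ v : Fin 3 ⊕ Fin 3, eval (Sum.elim x y) (pderiv v (conicBundleForm A)) = 0

/-- `x` lies on the discriminant curve `Γ = {det A = 0}`. -/
def OnGamma (A : Matrix (Fin 3) (Fin 3) (MvPolynomial (Fin 3) ℂ)) (x : Fin 3 → ℂ) : Prop :=
  eval x A.det = 0

/-- `Γ` is singular at `x`. -/
def SingGamma (A : Matrix (Fin 3) (Fin 3) (MvPolynomial (Fin 3) ℂ)) (x : Fin 3 → ℂ) : Prop :=
  eval x A.det = 0 ∧ ∀ i : Fin 3, eval x (pderiv i A.det) = 0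

/-!
At a point `x ∈ Γ` the symmetric matrix `B = A(x)` has rank 2, so its kernel is a line `ℂ y`;
as `B · adj B = 0` and `adj B` is symmetric, `adj B = α • y yᵀ` with `α ≠ 0`. Jacobi's formula
then gives `∂ₖ det A (x) = tr (adj B · ∂ₖA(x)) = α · yᵀ ∂ₖA(x) y`. On the other hand `(x, y)` is
singular on `Q` exactly when `B y = 0` and `yᵀ ∂ₖA(x) y = 0` for all `k`. Hence the fibre of
`Sing Q` over `x` is either empty or the single point `[y]`, and it is nonempty iff `x ∈ Sing Γ`.
For `B = diag(1,1,0)` one has `y = e₃` and `yᵀ ∂ₖA(x) y = ∂ₖa₃₃(x)`.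
-/

open Matrix Module

lemma Derivation.apply_det_fin_three {R S : Type*} [CommRing R] [CommRing S] [Algebra R S]
    (D : Derivation R S S) (M : Matrix (Fin 3) (Fin 3) S) :
    D M.det = trace (M.adjugate * M.map D) := by
  rw [det_fin_three, adjugate_fin_three, trace_fin_three]
  simp [Derivation.leibniz, mul_apply, Fin.sum_univ_three]
  ring

namespace Matrix

lemma trace_smul_vecMulVec_mul {n R : Type*} [Fintype n] [CommRing R] (α : R) (y : n → R)
    (D : Matrix n n R) : trace (α • vecMulVec y y * D) = α * (y ⬝ᵥ D *ᵥ y) := by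
  rw [smul_mul, trace_smul, vecMulVec_mul, trace_vecMulVec, dotProduct_mulVec, dotProduct_comm,
    smul_eq_mul]

variable {n K : Type*} [Fintype n] [Field K]

lemma exists_eq_smul_of_mulVec_eq_zero {B : Matrix n n K} (hB : B.rank + 1 = Fintype.card n)
    {y z : n → K} (hy : y ≠ 0) (hBy : B *ᵥ y = 0) (hBz : B *ᵥ z = 0) : ∃ c : K, z = c • y := by
  have hker : finrank K (LinearMap.ker B.mulVecLin) = 1 := by
    have := LinearMap.finrank_range_add_finrank_ker B.mulVecLin
    rw [finrank_fintype_fun_eq_card, ← hB] at this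
    unfold Matrix.rank at this
    omega
  obtain ⟨c, hc⟩ := (finrank_eq_one_iff_of_nonzero' (⟨y, hBy⟩ : LinearMap.ker B.mulVecLin)
    (by simpa [Subtype.ext_iff] using hy)).mp hker ⟨z, hBz⟩
  exact ⟨c, by simpa using congrArg Subtype.val hc.symm⟩

variable [DecidableEq n]

/-- `adj B i i` is the determinant of `B` with row `i` replaced by `eᵢ`. That matrix is invertible:
if it kills `z`, then `z i = 0` and `B z` vanishes off `i`, hence also at `i` because `yᵀ B = 0`;
so `z` is a multiple of `y` vanishing at `i`, i.e. `z = 0`. -/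
lemma adjugate_apply_self_ne_zero {B : Matrix n n K} {y : n → K}
    (hker : ∀ z, B *ᵥ z = 0 → ∃ c : K, z = c • y) (hyB : y ᵥ* B = 0) {i : n} (hyi : y i ≠ 0) :
    B.adjugate i i ≠ 0 := by
  rw [adjugate_apply, Ne, ← exists_mulVec_eq_zero_iff]
  rintro ⟨z, hz, hBz⟩
  have hrow : ∀ k, k ≠ i → (B *ᵥ z) k = 0 := fun k hk => by
    simpa [mulVec, updateRow_ne hk] using congrFun hBz k
  have hzi : z i = 0 := by simpa [mulVec] using congrFun hBz i
  have hBzi : y i * (B *ᵥ z) i = 0 :=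
    calc y i * (B *ᵥ z) i = y ⬝ᵥ B *ᵥ z :=
          (Finset.sum_eq_single (f := fun k => y k * (B *ᵥ z) k) i
            (fun k _ hk => by rw [hrow k hk, mul_zero]) (by simp)).symm
      _ = 0 := by rw [dotProduct_mulVec, hyB, zero_dotProduct]
  have hBz0 : B *ᵥ z = 0 := funext fun k => by
    by_cases hk : k = i
    · subst hk; exact (mul_eq_zero.mp hBzi).resolve_left hyi
    · exact hrow k hk
  obtain ⟨c, rfl⟩ := hker z hBz0
  have hc : c = 0 := by simpa [hyi] using hzi
  exact hz (by simp [hc])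

lemma IsSymm.exists_adjugate_eq_smul_vecMulVec {B : Matrix n n K} (hB : B.IsSymm)
    {y : n → K} (hy : y ≠ 0) (hBy : B *ᵥ y = 0) (hker : ∀ z, B *ᵥ z = 0 → ∃ c : K, z = c • y) :
    ∃ α : K, α ≠ 0 ∧ B.adjugate = α • vecMulVec y y := by
  have hdet : B.det = 0 := exists_mulVec_eq_zero_iff.mp ⟨y, hy, hBy⟩
  have hcol : ∀ j, ∃ β : K, ∀ i, B.adjugate i j = β * y i := fun j => by
    obtain ⟨β, hβ⟩ := hker (B.adjugate *ᵥ Pi.single j 1) (by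
      rw [mulVec_mulVec, mul_adjugate, hdet, zero_smul, zero_mulVec])
    exact ⟨β, fun i => by simpa [mulVec_single_one] using congrFun hβ i⟩
  choose β hβ using hcol
  obtain ⟨i₀, hi₀⟩ : ∃ i, y i ≠ 0 := Function.ne_iff.mp hy
  have hsymm : ∀ j, β j * y i₀ = β i₀ * y j := fun j => by
    rw [← hβ, ← hβ, hB.adjugate.apply]
  refine ⟨β i₀ / y i₀, ?_, ?_⟩
  · have hyB : y ᵥ* B = 0 := by rw [← mulVec_transpose, hB, hBy]
    have hβi₀ := adjugate_apply_self_ne_zero hker hyB hi₀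
    rw [hβ] at hβi₀
    exact div_ne_zero (left_ne_zero_of_mul hβi₀) hi₀
  · ext i j
    rw [hβ, smul_apply, vecMulVec_apply, smul_eq_mul]
    field_simp
    linear_combination y i * hsymm j

end Matrix

lemma pderiv_inr_rename_inl {σ τ R : Type*} [CommSemiring R] (k : τ) (p : MvPolynomial σ R) :
    pderiv (Sum.inr k) (rename Sum.inl p) = 0 :=
  pderiv_eq_zero_of_notMem_vars fun h => by
    obtain ⟨i, -, hi⟩ := mem_vars_rename _ _ h
    exact Sum.inl_ne_inr hi

section ConicBundle

variable (A : Matrix (Fin 3) (Fin 3) (MvPolynomial (Fin 3) ℂ))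

lemma eval_conicBundleForm (x y : Fin 3 → ℂ) :
    eval (Sum.elim x y) (conicBundleForm A) = y ⬝ᵥ A.map (eval x) *ᵥ y := by
  simp only [conicBundleForm, dotProduct, mulVec, map_sum, map_mul, eval_rename, eval_X,
    Sum.elim_comp_inl, Sum.elim_inr, Matrix.map_apply, Finset.mul_sum]
  refine Finset.sum_congr rfl fun i _ => Finset.sum_congr rfl fun j _ => ?_
  ring

lemma pderiv_inl_conicBundleForm (k : Fin 3) :
    pderiv (Sum.inl k) (conicBundleForm A) = conicBundleForm (A.map (pderiv k)) := by
  simp only [conicBundleForm, map_sum, Derivation.leibniz, pderiv_rename Sum.inl_injective,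
    pderiv_X, Pi.single_apply, Matrix.map_apply, reduceCtorEq, ↓reduceIte, smul_eq_mul, mul_zero,
    zero_add]
  refine Finset.sum_congr rfl fun i _ => Finset.sum_congr rfl fun j _ => ?_
  ring

lemma eval_pderiv_inr_conicBundleForm (hA : A.IsSymm) (x y : Fin 3 → ℂ) (k : Fin 3) :
    eval (Sum.elim x y) (pderiv (Sum.inr k) (conicBundleForm A)) = 2 * (A.map (eval x) *ᵥ y) k := by
  simp only [conicBundleForm, map_sum, Derivation.leibniz, pderiv_X, pderiv_inr_rename_inl,
    Pi.single_apply, Sum.inr_injective.eq_iff, smul_eq_mul, mul_ite, mul_one, mul_zero, add_zero,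
    Finset.sum_add_distrib, Finset.sum_ite_eq', Finset.sum_ite_irrel, Finset.sum_const_zero,
    Finset.mem_univ, if_true]
  simp only [map_add, map_sum, map_mul, eval_rename, eval_X, Sum.elim_comp_inl, Sum.elim_inr,
    mulVec, dotProduct, Matrix.map_apply, two_mul, hA.apply k, mul_comm (y _)]

lemma eval_pderiv_det (x : Fin 3 → ℂ) (k : Fin 3) :
    eval x (pderiv k A.det) =
      trace ((A.map (eval x)).adjugate * (A.map (pderiv k)).map (eval x)) := by
  rw [Derivation.apply_det_fin_three, AddMonoidHom.map_trace, Matrix.map_mul]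
  congr 2
  exact RingHom.map_adjugate (eval x) A

lemma onGamma_iff (x : Fin 3 → ℂ) : OnGamma A x ↔ (A.map (eval x)).det = 0 := by
  rw [OnGamma, RingHom.map_det]
  rfl

lemma singQ_iff (hA : A.IsSymm) (x y : Fin 3 → ℂ) :
    SingQ A x y ↔ A.map (eval x) *ᵥ y = 0 ∧
      ∀ k, y ⬝ᵥ (A.map (pderiv k)).map (eval x) *ᵥ y = 0 := by
  simp only [SingQ, Sum.forall, eval_conicBundleForm, pderiv_inl_conicBundleForm,
    eval_pderiv_inr_conicBundleForm A hA, mul_eq_zero, two_ne_zero, false_or]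
  constructor
  · rintro ⟨-, hD, hB⟩
    exact ⟨funext hB, hD⟩
  · rintro ⟨hB, hD⟩
    exact ⟨by rw [hB, dotProduct_zero], hD, fun k => by rw [hB, Pi.zero_apply]⟩

lemma exists_eval_pderiv_det_eq_smul (hA : A.IsSymm) {x y : Fin 3 → ℂ}
    (hrank : (A.map (eval x)).rank = 2) (hy : y ≠ 0) (hBy : A.map (eval x) *ᵥ y = 0) :
    ∃ α : ℂ, α ≠ 0 ∧
      ∀ k, eval x (pderiv k A.det) = α * (y ⬝ᵥ (A.map (pderiv k)).map (eval x) *ᵥ y) := by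
  obtain ⟨α, hα, hadj⟩ := (hA.map (eval x)).exists_adjugate_eq_smul_vecMulVec hy hBy
    fun z hz => exists_eq_smul_of_mulVec_eq_zero (by rw [hrank]; rfl) hy hBy hz
  exact ⟨α, hα, fun k => by rw [eval_pderiv_det, hadj, trace_smul_vecMulVec_mul]⟩

variable {A}

lemma singGamma_of_singQ (hA : A.IsSymm)
    (hrank : ∀ x : Fin 3 → ℂ, x ≠ 0 → OnGamma A x → (A.map (eval x)).rank = 2)
    {x y : Fin 3 → ℂ} (hx : x ≠ 0) (hy : y ≠ 0) (h : SingQ A x y) : SingGamma A x := by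
  obtain ⟨hBy, hD⟩ := (singQ_iff A hA x y).mp h
  have hΓ : OnGamma A x := (onGamma_iff A x).mpr (exists_mulVec_eq_zero_iff.mp ⟨y, hy, hBy⟩)
  obtain ⟨α, -, hα⟩ := exists_eval_pderiv_det_eq_smul A hA (hrank x hx hΓ) hy hBy
  exact ⟨hΓ, fun k => by rw [hα, hD, mul_zero]⟩

lemma exists_singQ_of_singGamma (hA : A.IsSymm)
    (hrank : ∀ x : Fin 3 → ℂ, x ≠ 0 → OnGamma A x → (A.map (eval x)).rank = 2)
    {x : Fin 3 → ℂ} (hx : x ≠ 0) (h : SingGamma A x) :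
    ∃ y : Fin 3 → ℂ, y ≠ 0 ∧ SingQ A x y ∧
      ∀ y' : Fin 3 → ℂ, y' ≠ 0 → SingQ A x y' → ∃ c : ℂ, c ≠ 0 ∧ y' = c • y := by
  obtain ⟨hΓ, hD⟩ := h
  obtain ⟨y, hy, hBy⟩ := exists_mulVec_eq_zero_iff.mpr ((onGamma_iff A x).mp hΓ)
  have hr := hrank x hx hΓ
  obtain ⟨α, hα, hdet⟩ := exists_eval_pderiv_det_eq_smul A hA hr hy hBy
  refine ⟨y, hy, (singQ_iff A hA x y).mpr ⟨hBy, fun k => ?_⟩, fun y' hy' h' => ?_⟩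
  · exact (mul_eq_zero.mp ((hdet k).symm.trans (hD k))).resolve_left hα
  · obtain ⟨c, rfl⟩ := exists_eq_smul_of_mulVec_eq_zero (by rw [hr]; rfl) hy hBy
      ((singQ_iff A hA x y').mp h').1
    exact ⟨c, left_ne_zero_of_smul hy', rfl⟩

lemma exists_singQ_iff_of_eq_diagonal (hA : A.IsSymm) {x : Fin 3 → ℂ}
    (hrank : (A.map (eval x)).rank = 2) (hdiag : A.map (eval x) = diagonal ![1, 1, 0]) :
    (∃ y : Fin 3 → ℂ, y ≠ 0 ∧ SingQ A x y) ↔ ∀ i : Fin 3, eval x (pderiv i (A 2 2)) = 0 := by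
  have he : A.map (eval x) *ᵥ Pi.single 2 1 = 0 := by
    rw [hdiag]
    ext i
    fin_cases i <;> simp
  have hD : ∀ k (c : ℂ), (c • Pi.single 2 1) ⬝ᵥ (A.map (pderiv k)).map (eval x) *ᵥ
      (c • Pi.single 2 1) = c ^ 2 * eval x (pderiv k (A 2 2)) := fun k c => by
    simp [mulVec_smul, sq, mul_assoc]
  constructor
  · rintro ⟨y, hy, h⟩
    obtain ⟨hBy, hDy⟩ := (singQ_iff A hA x y).mp h
    obtain ⟨c, rfl⟩ := exists_eq_smul_of_mulVec_eq_zero (by rw [hrank]; rfl)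
      (Pi.single_ne_zero_iff.mpr one_ne_zero) he hBy
    intro k
    have hk := hDy k
    rw [hD] at hk
    exact (mul_eq_zero.mp hk).resolve_left (pow_ne_zero 2 (left_ne_zero_of_smul hy))
  · intro h
    refine ⟨Pi.single 2 1, Pi.single_ne_zero_iff.mpr one_ne_zero,
      (singQ_iff A hA x _).mpr ⟨he, fun k => ?_⟩⟩
    simp [h k]

end ConicBundle

theorem stmt_0_general (A : Matrix (Fin 3) (Fin 3) (MvPolynomial (Fin 3) ℂ))
    (hsym : A.IsSymm)
    (hrank : ∀ x : Fin 3 → ℂ, x ≠ 0 → OnGamma A x → (A.map (eval x)).rank = 2) :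
    (∀ x : Fin 3 → ℂ, x ≠ 0 → OnGamma A x →
      A.map (eval x) = Matrix.diagonal ![1, 1, 0] →
      ((∃ y : Fin 3 → ℂ, y ≠ 0 ∧ SingQ A x y) ↔
        (∀ i : Fin 3, eval x (pderiv i (A 2 2)) = 0)) ∧
      ((∀ i : Fin 3, eval x (pderiv i (A 2 2)) = 0) → SingGamma A x)) ∧
    (∀ x y : Fin 3 → ℂ, x ≠ 0 → y ≠ 0 → SingQ A x y → SingGamma A x) ∧
    (∀ x : Fin 3 → ℂ, x ≠ 0 → SingGamma A x →
      ∃ y : Fin 3 → ℂ, y ≠ 0 ∧ SingQ A x y ∧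
        ∀ y' : Fin 3 → ℂ, y' ≠ 0 → SingQ A x y' → ∃ c : ℂ, c ≠ 0 ∧ y' = c • y) := by
  refine ⟨fun x hx hΓ hdiag => ?_, fun x y hx hy => singGamma_of_singQ hsym hrank hx hy,
    fun x hx => exists_singQ_of_singGamma hsym hrank hx⟩
  have hiff := exists_singQ_iff_of_eq_diagonal hsym (hrank x hx hΓ) hdiag
  refine ⟨hiff, fun h => ?_⟩
  obtain ⟨y, hy, hQ⟩ := hiff.mpr h
  exact singGamma_of_singQ hsym hrank hx hy hQ

/-- for a conic bundle `Q ⊂ ℙ²×ℙ²` given by a symmetric matrix `A` of quadratic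
forms whose rank is `2` at every point of the discriminant `Γ = {det A = 0}`:
if at a point `x ∈ Γ` the matrix `A(x)` is `diag(1,1,0)`, then the fibre over `x` contains a
singular point of `Q` iff `a₃₃ ∈ m_x²` (i.e. all partial derivatives of `a₃₃` vanish at `x`),
and in that case `Γ` is singular at `x`; consequently the first projection restricts to a
bijection `Sing(Q) → Sing(Γ)` (bijectivity stated projectively: existence and uniqueness of the
singular point in the fibre, up to scalar). -/
theorem stmt_0 (A : Matrix (Fin 3) (Fin 3) (MvPolynomial (Fin 3) ℂ))
    (hsym : A.IsSymm)
    (hdeg : ∀ i j, (A i j).IsHomogeneous 2)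
    (hrank : ∀ x : Fin 3 → ℂ, x ≠ 0 → OnGamma A x → (A.map (eval x)).rank = 2) :
    (∀ x : Fin 3 → ℂ, x ≠ 0 → OnGamma A x →
      A.map (eval x) = Matrix.diagonal ![1, 1, 0] →
      ((∃ y : Fin 3 → ℂ, y ≠ 0 ∧ SingQ A x y) ↔
        (∀ i : Fin 3, eval x (pderiv i (A 2 2)) = 0)) ∧
      ((∀ i : Fin 3, eval x (pderiv i (A 2 2)) = 0) → SingGamma A x)) ∧
    (∀ x y : Fin 3 → ℂ, x ≠ 0 → y ≠ 0 → SingQ A x y → SingGamma A x) ∧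
    (∀ x : Fin 3 → ℂ, x ≠ 0 → SingGamma A x →
      ∃ y : Fin 3 → ℂ, y ≠ 0 ∧ SingQ A x y ∧
        ∀ y' : Fin 3 → ℂ, y' ≠ 0 → SingQ A x y' → ∃ c : ℂ, c ≠ 0 ∧ y' = c • y) :=
  stmt_0_general A hsym hrank
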